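/- For every positive integer n, the toric map f̄ and the reverse map g are graph automorphisms of Cay(Sym_n, T_n): both are bijections of Sym_n, and for all π, ρ ∈ Sym_n, π and ρ are adjacent in Cay(Sym_n, T_n) if and only if f̄(π) and f̄(ρ) are adjacent, and if and only if g(π) and g(ρ) are adjacent. -/

import Mathlib

/-- Auxiliary function: the action of the block transposition with cut points
`(i,j,k)` on `{1,…,n}`, written 1-based. -/
def btFun (i j k t : ℕ) : ℕ :=
  if t ≤ i ∨ k < t then t
  else if t ≤ k - j + i then t + j - i
  else t + j - k

theorem btFun_lb {i j k t : ℕ} (h1 : 1 ≤ t) : 1 ≤ btFun i j k t := by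
  unfold btFun; split_ifs <;> omega

theorem btFun_ub {i j k t n : ℕ} (ht : t ≤ n) (hjk : j ≤ k) (hkn : k ≤ n) :
    btFun i j k t ≤ n := by
  unfold btFun; split_ifs <;> omega

theorem btFun_inv {i j k : ℕ} (hij : i < j) (hjk : j < k) (t : ℕ) :
    btFun i (k - j + i) k (btFun i j k t) = t := by
  unfold btFun; split_ifs <;> omega

theorem btFun_inv' {i j k : ℕ} (hij : i < j) (hjk : j < k) (t : ℕ) :
    btFun i j k (btFun i (k - j + i) k t) = t := by
  have h := btFun_inv (i := i) (j := k - j + i) (k := k) (by omega) (by omega) t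
  have e : k - (k - j + i) + i = j := by omega
  rwa [e] at h

/-- The block transposition `σ(i,j,k)` as a permutation of `Fin n`,
where `t : Fin n` encodes the element `t.val + 1` of `{1,…,n}`. -/
def blockT (n i j k : ℕ) (hij : i < j) (hjk : j < k) (hkn : k ≤ n) :
    Equiv.Perm (Fin n) where
  toFun t := ⟨btFun i j k (t.1 + 1) - 1, by
    have h0 := t.isLt
    have h1 := btFun_lb (i := i) (j := j) (k := k) (t := t.1 + 1) (by omega)
    have h2 := btFun_ub (i := i) (j := j) (k := k) (t := t.1 + 1) (n := n)
      (by omega) (by omega) hkn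
    omega⟩
  invFun t := ⟨btFun i (k - j + i) k (t.1 + 1) - 1, by
    have h0 := t.isLt
    have h1 := btFun_lb (i := i) (j := k - j + i) (k := k) (t := t.1 + 1) (by omega)
    have h2 := btFun_ub (i := i) (j := k - j + i) (k := k) (t := t.1 + 1) (n := n)
      (by omega) (by omega) hkn
    omega⟩
  left_inv t := by
    have h1 := btFun_lb (i := i) (j := j) (k := k) (t := t.1 + 1) (by omega)
    have h2 := btFun_inv hij hjk (t.1 + 1)
    apply Fin.ext
    simp only
    have h3 : btFun i j k (t.1 + 1) - 1 + 1 = btFun i j k (t.1 + 1) := by omega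
    rw [h3, h2]
    omega
  right_inv t := by
    have h1 := btFun_lb (i := i) (j := k - j + i) (k := k) (t := t.1 + 1) (by omega)
    have h2 := btFun_inv' hij hjk (t.1 + 1)
    apply Fin.ext
    simp only
    have h3 : btFun i (k - j + i) k (t.1 + 1) - 1 + 1 = btFun i (k - j + i) k (t.1 + 1) := by
      omega
    rw [h3, h2]
    omega

/-- `T_n`: the set of all block transpositions on `{1,…,n}`. -/
def blockTranspositions (n : ℕ) : Set (Equiv.Perm (Fin n)) :=
  {π | ∃ (i j k : ℕ) (hij : i < j) (hjk : j < k) (hkn : k ≤ n),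
      blockT n i j k hij hjk hkn = π}

theorem blockT_inv {n i j k : ℕ} (hij : i < j) (hjk : j < k) (hkn : k ≤ n) :
    (blockT n i j k hij hjk hkn)⁻¹
      = blockT n i (k - j + i) k (by omega) (by omega) hkn :=
  Equiv.ext fun _ => rfl

theorem blockTranspositions_inv_mem {n : ℕ} {π : Equiv.Perm (Fin n)}
    (h : π ∈ blockTranspositions n) : π⁻¹ ∈ blockTranspositions n := by
  obtain ⟨i, j, k, hij, hjk, hkn, rfl⟩ := h
  exact ⟨i, k - j + i, k, by omega, by omega, hkn, (blockT_inv hij hjk hkn).symm⟩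

/-- The Cayley graph `Cay(Sym_n, T_n)`. -/
def cayleyT (n : ℕ) : SimpleGraph (Equiv.Perm (Fin n)) where
  Adj π ρ := π ≠ ρ ∧ π⁻¹ * ρ ∈ blockTranspositions n
  symm := ⟨by
    rintro π ρ ⟨hne, hmem⟩
    refine ⟨hne.symm, ?_⟩
    have h := blockTranspositions_inv_mem hmem
    rwa [mul_inv_rev, inv_inv] at h⟩
  loopless := ⟨fun π h => h.1 rfl⟩

def ext0 {n : ℕ} (π : Equiv.Perm (Fin n)) : Equiv.Perm (Fin (n + 1)) where
  toFun x := Fin.cases 0 (fun t => (π t).succ) x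
  invFun x := Fin.cases 0 (fun t => (π⁻¹ t).succ) x
  left_inv x := by
    cases x using Fin.cases with
    | zero => simp
    | succ t => simp
  right_inv x := by
    cases x using Fin.cases with
    | zero => simp
    | succ t => simp

theorem ext0_zero {n : ℕ} (π : Equiv.Perm (Fin n)) : ext0 π 0 = 0 := by
  simp [ext0]

open Fin.NatCast Fin.CommRing in
theorem finRotate_pow_apply {n : ℕ} (m : ℕ) (x : Fin (n + 1)) :
    ((finRotate (n + 1)) ^ m) x = x + (m : Fin (n + 1)) := by
  induction m with
  | zero => simp
  | succ m ih =>
      rw [pow_succ', Equiv.Perm.mul_apply, finRotate_succ_apply, ih]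
      push_cast
      ring

open Fin.NatCast Fin.CommRing in
/-- The auxiliary permutation `α^(n+1-r) ∘ [0 π] ∘ α^(π⁻¹(r))` of `{0,1,…,n}`. -/
def toricAux (n r : ℕ) (π : Equiv.Perm (Fin n)) : Equiv.Perm (Fin (n + 1)) :=
  (finRotate (n + 1)) ^ (n + 1 - r) * ext0 π *
    (finRotate (n + 1)) ^ (((ext0 π)⁻¹ (r : Fin (n + 1))) : ℕ)

open Fin.NatCast Fin.CommRing in
theorem toricAux_apply_zero (n r : ℕ) (hr : r ≤ n) (π : Equiv.Perm (Fin n)) :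
    toricAux n r π 0 = 0 := by
  unfold toricAux
  have h : r + (n + 1 - r) = n + 1 := by omega
  rw [Equiv.Perm.mul_apply, Equiv.Perm.mul_apply, finRotate_pow_apply,
    finRotate_pow_apply, zero_add, Fin.cast_val_eq_self,
    ← Equiv.Perm.mul_apply, mul_inv_cancel, Equiv.Perm.one_apply, ← Nat.cast_add, h, Fin.natCast_self]

/-- Restriction of a permutation of `{0,1,…,n}` fixing `0` to a permutation of `{1,…,n}`. -/
def unext0 {n : ℕ} (τ : Equiv.Perm (Fin (n + 1))) (h : τ 0 = 0) : Equiv.Perm (Fin n) where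
  toFun t := (τ t.succ).pred (by
    intro hc
    exact Fin.succ_ne_zero t (τ.injective (hc.trans h.symm)))
  invFun t := (τ⁻¹ t.succ).pred (by
    intro hc
    have h' : τ⁻¹ 0 = 0 := by
      conv_lhs => rw [← h]
      rw [← Equiv.Perm.mul_apply, inv_mul_cancel, Equiv.Perm.one_apply]
    exact Fin.succ_ne_zero t (τ⁻¹.injective (hc.trans h'.symm)))
  left_inv t := by
    apply Fin.succ_injective
    rw [Fin.succ_pred, Fin.succ_pred, ← Equiv.Perm.mul_apply, inv_mul_cancel, Equiv.Perm.one_apply]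
  right_inv t := by
    apply Fin.succ_injective
    rw [Fin.succ_pred, Fin.succ_pred, ← Equiv.Perm.mul_apply, mul_inv_cancel, Equiv.Perm.one_apply]

/-- The toric map `f̄_r` on `Sym_n`. -/
def toricMap (n r : ℕ) (hr : r ≤ n) (π : Equiv.Perm (Fin n)) : Equiv.Perm (Fin n) :=
  unext0 (toricAux n r π) (toricAux_apply_zero n r hr π)

/-- The reversal `w : t ↦ n+1-t` of `{1,…,n}`, in the `Fin n` encoding. -/
def wrev (n : ℕ) : Equiv.Perm (Fin n) where
  toFun t := ⟨n - 1 - t.val, by have := t.isLt; omega⟩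
  invFun t := ⟨n - 1 - t.val, by have := t.isLt; omega⟩
  left_inv t := by
    have := t.isLt
    apply Fin.ext
    simp only
    omega
  right_inv t := by
    have := t.isLt
    apply Fin.ext
    simp only
    omega

theorem wrev_wrev {n : ℕ} (t : Fin n) : wrev n (wrev n t) = t := by
  have := t.isLt
  apply Fin.ext
  simp only [wrev, Equiv.coe_fn_mk]
  omega

/-- The reverse map `g` on `Sym_n`: `g(π) = w ∘ π ∘ w`,
i.e. `(g π)(t) = n+1-π(n+1-t)` in 1-based notation. -/
def revMap {n : ℕ} (π : Equiv.Perm (Fin n)) : Equiv.Perm (Fin n) :=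
  wrev n * π * wrev n

theorem revMap_revMap {n : ℕ} (π : Equiv.Perm (Fin n)) : revMap (revMap π) = π := by
  ext t
  simp only [revMap, Equiv.Perm.mul_apply]
  rw [wrev_wrev, wrev_wrev]

/-!
`f̄_s ∘ f̄_r = f̄_(r+s)` whenever `r + s ≤ n + 1`, and `f̄_0 = f̄_(n+1) = id`; hence
`f̄_r = f̄^r` and `f̄^(n+1) = id`, so `f̄` is a bijection. Since
`f̄_r(π)⁻¹ ∘ f̄_r(ρ) = f̄_a(π⁻¹ ∘ ρ)` with `a = π⁻¹(r)`, `f̄` preserves adjacency once every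
`f̄_a = f̄^a` maps `T_n` into itself, and for `f̄` itself this is a direct computation:
`f̄(σ(i,j,k))` is `σ(i-1,j-1,k-1)` if `i > 0` and `σ(j-1,k-1,n)` if `i = 0`.
The reverse map is conjugation by the involution `t ↦ n+1-t`, a group automorphism sending
`σ(i,j,k)` to `σ(n-k,n-j,n-i)`. Finally, a map that preserves a relation and has a power equal
to the identity also reflects it.
-/

open Fin.NatCast Fin.CommRing

namespace Function

variable {α : Type*} {f : α → α} {k : ℕ}

theorem bijective_of_iterate_succ_eq_id (h : f^[k + 1] = id) : Bijective f :=
  bijective_iff_has_inverse.mpr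
    ⟨f^[k], fun a => by rw [← iterate_succ_apply, h, id],
      fun a => by rw [← iterate_succ_apply' f k, h, id]⟩

theorem iterate_map_rel {r : α → α → Prop} (hf : ∀ a b, r a b → r (f a) (f b)) (m : ℕ)
    {a b : α} (h : r a b) : r (f^[m] a) (f^[m] b) := by
  induction m with
  | zero => exact h
  | succ m ih => rw [iterate_succ_apply', iterate_succ_apply']; exact hf _ _ ih

theorem map_rel_iff_of_iterate_succ_eq_id {r : α → α → Prop} (h : f^[k + 1] = id)
    (hf : ∀ a b, r a b → r (f a) (f b)) {a b : α} : r a b ↔ r (f a) (f b) := by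
  refine ⟨hf a b, fun hab => ?_⟩
  simpa only [← iterate_succ_apply, h, id] using iterate_map_rel hf k hab

end Function

theorem Fin.natCast_sub_eq_neg {n r : ℕ} (hr : r ≤ n + 1) :
    ((n + 1 - r : ℕ) : Fin (n + 1)) = -r := by
  rw [Nat.cast_sub hr, Fin.natCast_self, zero_sub]

section ZeroExtension

variable {n : ℕ}

theorem ext0_mul (π ρ : Equiv.Perm (Fin n)) : ext0 (π * ρ) = ext0 π * ext0 ρ := by
  ext x
  cases x using Fin.cases <;> simp [ext0]

theorem ext0_inv (π : Equiv.Perm (Fin n)) : (ext0 π)⁻¹ = ext0 π⁻¹ :=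
  rfl

theorem ext0_injective : Function.Injective (ext0 (n := n)) := fun π ρ h =>
  Equiv.ext fun t => Fin.succ_injective _ (by simpa [ext0] using congrArg (· t.succ) h)

theorem ext0_unext0 (τ : Equiv.Perm (Fin (n + 1))) (h : τ 0 = 0) : ext0 (unext0 τ h) = τ := by
  ext x
  cases x using Fin.cases
  · simp [ext0, h]
  · simp [ext0, unext0]

theorem ext0_blockT_val {i j k : ℕ} (hij : i < j) (hjk : j < k) (hkn : k ≤ n)
    (y : Fin (n + 1)) : (ext0 (blockT n i j k hij hjk hkn) y : ℕ) = btFun i j k y := by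
  cases y using Fin.cases with
  | zero => simp [ext0, btFun]
  | succ t =>
    have := btFun_lb (i := i) (j := j) (k := k) (t := t.1 + 1) (by omega)
    simp only [ext0, blockT, Equiv.coe_fn_mk, Fin.cases_succ, Fin.val_succ]
    omega

end ZeroExtension

section Toric

variable {n : ℕ}

theorem ext0_toricMap {r : ℕ} (hr : r ≤ n) (π : Equiv.Perm (Fin n)) :
    ext0 (toricMap n r hr π) = toricAux n r π :=
  ext0_unext0 _ _

theorem toricAux_apply (r : ℕ) (π : Equiv.Perm (Fin n)) (x : Fin (n + 1)) :
    toricAux n r π x = ext0 π (x + (ext0 π)⁻¹ r) + ((n + 1 - r : ℕ) : Fin (n + 1)) := by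
  rw [toricAux, Equiv.Perm.mul_apply, Equiv.Perm.mul_apply, finRotate_pow_apply,
    finRotate_pow_apply, Fin.cast_val_eq_self]

theorem toricAux_of_natCast_eq_zero {r : ℕ} (hr : r ≤ n + 1) (h : (r : Fin (n + 1)) = 0)
    (π : Equiv.Perm (Fin n)) : toricAux n r π = ext0 π := by
  refine Equiv.ext fun x => ?_
  rw [toricAux_apply, h, Fin.natCast_sub_eq_neg hr, h, neg_zero, add_zero, ext0_inv, ext0_zero,
    add_zero]

theorem toricAux_toricMap {r s : ℕ} (hr : r ≤ n) (hrs : r + s ≤ n + 1)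
    (π : Equiv.Perm (Fin n)) : toricAux n s (toricMap n r hr π) = toricAux n (r + s) π := by
  have hinv : (toricAux n r π)⁻¹ s = (ext0 π)⁻¹ (r + s : ℕ) - (ext0 π)⁻¹ r := by
    rw [Equiv.Perm.inv_eq_iff_eq, toricAux_apply, sub_add_cancel, Fin.natCast_sub_eq_neg (by omega)]
    simp only [Equiv.Perm.coe_inv, Equiv.apply_symm_apply]
    push_cast
    ring
  refine Equiv.ext fun x => ?_
  rw [toricAux_apply, ext0_toricMap, hinv, toricAux_apply, add_assoc x, sub_add_cancel,
    toricAux_apply, Fin.natCast_sub_eq_neg (by omega), Fin.natCast_sub_eq_neg (by omega),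
    Fin.natCast_sub_eq_neg hrs]
  push_cast
  ring

theorem toricMap_inv_mul {r : ℕ} (hr : r ≤ n) (π ρ : Equiv.Perm (Fin n)) :
    (toricMap n r hr π)⁻¹ * toricMap n r hr ρ
      = toricMap n ((ext0 π)⁻¹ r) (Fin.is_le _) (π⁻¹ * ρ) := by
  apply ext0_injective
  refine Equiv.ext fun x => ?_
  rw [ext0_mul, ← ext0_inv, ext0_toricMap, ext0_toricMap, ext0_toricMap, Equiv.Perm.mul_apply,
    Equiv.Perm.inv_eq_iff_eq, toricAux_apply, toricAux_apply, toricAux_apply, ext0_mul,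
    ← ext0_inv, mul_inv_rev, inv_inv, Equiv.Perm.mul_apply, Equiv.Perm.mul_apply,
    Fin.cast_val_eq_self, Fin.natCast_sub_eq_neg (by omega), Fin.natCast_sub_eq_neg (by omega),
    Fin.cast_val_eq_self]
  simp only [Equiv.Perm.coe_inv, Equiv.apply_symm_apply, neg_add_cancel_right]

theorem toricMap_eq_iterate (h1 : 1 ≤ n) {r : ℕ} (hr : r ≤ n) :
    toricMap n r hr = (toricMap n 1 h1)^[r] := by
  induction r with
  | zero =>
    funext π
    apply ext0_injective
    rw [ext0_toricMap, toricAux_of_natCast_eq_zero (Nat.zero_le _) Nat.cast_zero]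
    rfl
  | succ r ih =>
    funext π
    apply ext0_injective
    rw [Function.iterate_succ_apply', ← ih (by omega), ext0_toricMap, ext0_toricMap,
      toricAux_toricMap (by omega) (by omega)]

theorem toricMap_one_iterate (h1 : 1 ≤ n) : (toricMap n 1 h1)^[n + 1] = id := by
  funext π
  apply ext0_injective
  rw [Function.iterate_succ_apply', ← toricMap_eq_iterate h1 le_rfl, ext0_toricMap,
    toricAux_toricMap le_rfl le_rfl, toricAux_of_natCast_eq_zero le_rfl (Fin.natCast_self _)]
  rfl

theorem toricAux_one_blockT_val {i j k : ℕ} (hij : i < j) (hjk : j < k)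
    (hkn : k ≤ n) (x : Fin (n + 1)) :
    (toricAux n 1 (blockT n i j k hij hjk hkn) x : ℕ) =
      let s := btFun i (k - j + i) k 1
      let y := btFun i j k (if n + 1 ≤ x + s then x + s - (n + 1) else x + s)
      if n + 1 ≤ y + n then y + n - (n + 1) else y + n := by
  have hone : (((1 : ℕ) : Fin (n + 1)) : ℕ) = 1 := Fin.val_cast_of_lt (by omega)
  have hn : (((n + 1 - 1 : ℕ) : Fin (n + 1)) : ℕ) = n := Fin.val_cast_of_lt (by omega)
  rw [toricAux_apply, Fin.val_add_eq_ite, ext0_blockT_val, Fin.val_add_eq_ite, ext0_inv,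
    blockT_inv, ext0_blockT_val, hone, hn]

theorem toricMap_one_blockT_of_pos (h1 : 1 ≤ n) {i j k : ℕ} (hi : 0 < i) (hij : i < j)
    (hjk : j < k) (hkn : k ≤ n) :
    toricMap n 1 h1 (blockT n i j k hij hjk hkn)
      = blockT n (i - 1) (j - 1) (k - 1) (by omega) (by omega) (by omega) := by
  apply ext0_injective
  refine Equiv.ext fun x => Fin.ext ?_
  have hs : btFun i (k - j + i) k 1 = 1 := by unfold btFun; split_ifs <;> omega
  have hx := x.isLt
  rw [ext0_toricMap, toricAux_one_blockT_val, ext0_blockT_val]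
  dsimp only
  rw [hs]
  by_cases hxs : n + 1 ≤ x + 1
  · rw [if_pos hxs]; unfold btFun; split_ifs <;> omega
  · rw [if_neg hxs]; unfold btFun; split_ifs <;> omega

theorem toricMap_one_blockT_zero (h1 : 1 ≤ n) {j k : ℕ} (hj : 0 < j) (hjk : j < k)
    (hkn : k ≤ n) :
    toricMap n 1 h1 (blockT n 0 j k hj hjk hkn)
      = blockT n (j - 1) (k - 1) n (by omega) (by omega) le_rfl := by
  apply ext0_injective
  refine Equiv.ext fun x => Fin.ext ?_
  have hs : btFun 0 (k - j + 0) k 1 = 1 + k - j := by unfold btFun; split_ifs <;> omega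
  have hx := x.isLt
  rw [ext0_toricMap, toricAux_one_blockT_val, ext0_blockT_val]
  dsimp only
  rw [hs]
  by_cases hxs : n + 1 ≤ x + (1 + k - j)
  · rw [if_pos hxs]; unfold btFun; split_ifs <;> omega
  · rw [if_neg hxs]; unfold btFun; split_ifs <;> omega

theorem toricMap_one_mapsTo (h1 : 1 ≤ n) :
    Set.MapsTo (toricMap n 1 h1) (blockTranspositions n) (blockTranspositions n) := by
  rintro _ ⟨i, j, k, hij, hjk, hkn, rfl⟩
  rcases Nat.eq_zero_or_pos i with rfl | hi
  · exact ⟨_, _, _, _, _, _, (toricMap_one_blockT_zero h1 hij hjk hkn).symm⟩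
  · exact ⟨_, _, _, _, _, _, (toricMap_one_blockT_of_pos h1 hi hij hjk hkn).symm⟩

theorem toricMap_mapsTo (h1 : 1 ≤ n) {r : ℕ} (hr : r ≤ n) :
    Set.MapsTo (toricMap n r hr) (blockTranspositions n) (blockTranspositions n) :=
  toricMap_eq_iterate h1 hr ▸ (toricMap_one_mapsTo h1).iterate r

theorem cayleyT_adj_toricMap (h1 : 1 ≤ n) {π ρ : Equiv.Perm (Fin n)}
    (h : (cayleyT n).Adj π ρ) :
    (cayleyT n).Adj (toricMap n 1 h1 π) (toricMap n 1 h1 ρ) :=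
  ⟨(Function.bijective_of_iterate_succ_eq_id (toricMap_one_iterate h1)).injective.ne h.1, by
    rw [toricMap_inv_mul]
    exact toricMap_mapsTo h1 _ h.2⟩

end Toric

section Reverse

variable {n : ℕ}

theorem wrev_inv : (wrev n)⁻¹ = wrev n :=
  rfl

theorem revMap_eq_conj (π : Equiv.Perm (Fin n)) : revMap π = MulAut.conj (wrev n) π := by
  rw [MulAut.conj_apply, wrev_inv]
  rfl

theorem revMap_blockT {i j k : ℕ} (hij : i < j) (hjk : j < k) (hkn : k ≤ n) :
    revMap (blockT n i j k hij hjk hkn)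
      = blockT n (n - k) (n - j) (n - i) (by omega) (by omega) (by omega) := by
  refine Equiv.ext fun t => Fin.ext ?_
  have ht := t.isLt
  simp only [revMap, Equiv.Perm.mul_apply, wrev, blockT, Equiv.coe_fn_mk]
  unfold btFun
  split_ifs <;> omega

theorem revMap_mapsTo :
    Set.MapsTo revMap (blockTranspositions n) (blockTranspositions n) := by
  rintro _ ⟨i, j, k, hij, hjk, hkn, rfl⟩
  exact ⟨n - k, n - j, n - i, by omega, by omega, by omega, (revMap_blockT hij hjk hkn).symm⟩

theorem cayleyT_adj_revMap {π ρ : Equiv.Perm (Fin n)} (h : (cayleyT n).Adj π ρ) :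
    (cayleyT n).Adj (revMap π) (revMap ρ) :=
  ⟨(Function.LeftInverse.injective revMap_revMap).ne h.1, by
    simpa only [revMap_eq_conj, map_mul, map_inv] using revMap_mapsTo h.2⟩

end Reverse

/-- The toric map `f̄` and the reverse map `g` are graph
automorphisms of `Cay(Sym_n, T_n)`. -/
theorem stmt_8 (n : ℕ) (hn : 1 ≤ n) :
    Function.Bijective (toricMap n 1 hn) ∧
    Function.Bijective (revMap (n := n)) ∧
    (∀ π ρ : Equiv.Perm (Fin n),
      ((cayleyT n).Adj π ρ ↔ (cayleyT n).Adj (toricMap n 1 hn π) (toricMap n 1 hn ρ)) ∧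
      ((cayleyT n).Adj π ρ ↔ (cayleyT n).Adj (revMap π) (revMap ρ))) := by
  have htoric := toricMap_one_iterate hn
  have hrev : (revMap (n := n))^[1 + 1] = id := funext revMap_revMap
  refine ⟨Function.bijective_of_iterate_succ_eq_id htoric,
    Function.bijective_of_iterate_succ_eq_id hrev, fun π ρ => ⟨?_, ?_⟩⟩
  · exact Function.map_rel_iff_of_iterate_succ_eq_id (r := (cayleyT n).Adj) htoric
      fun _ _ => cayleyT_adj_toricMap hn
  · exact Function.map_rel_iff_of_iterate_succ_eq_id (r := (cayleyT n).Adj) hrev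
      fun _ _ => cayleyT_adj_revMap
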